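/- Under the hypotheses of the general estimate but with arbitrary mean g₀, if c²(Var(f) + Var(h)) − g₀² ≥ 0 (and > 0), then S^g_{T,x_i} ≤ 2L²Var(f)·S^f_{T,x_i} / (c²(Var(f)+Var(h)) − g₀²). -/

import Mathlib

open MeasureTheory

noncomputable section SobolDefs

/-- Uniform probability measure on the open unit cube `(0,1)^n`. -/
def uCube (n : ℕ) : Measure (Fin n → ℝ) :=
  Measure.pi fun _ => volume.restrict (Set.Ioo 0 1)

/-- Mean value of `f`. -/
def mval {α : Type*} [MeasurableSpace α] (μ : Measure α) (f : α → ℝ) : ℝ := ∫ x, f x ∂μ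

/-- Integral of the square of `f`. -/
def intSq {α : Type*} [MeasurableSpace α] (μ : Measure α) (f : α → ℝ) : ℝ := ∫ x, (f x) ^ 2 ∂μ

/-- Variance of `f`. -/
def var' {α : Type*} [MeasurableSpace α] (μ : Measure α) (f : α → ℝ) : ℝ := intSq μ f - (mval μ f) ^ 2

/-- Covariance of `f` and `h`. -/
def cov' {α : Type*} [MeasurableSpace α] (μ : Measure α) (f h : α → ℝ) : ℝ :=
  (∫ x, f x * h x ∂μ) - mval μ f * mval μ h

/-- Conditional mean of `f` obtained by integrating out the coordinate encoded
by the update map `upd` over `(0,1)`. -/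
def cMean {α : Type*} [MeasurableSpace α] (upd : α → ℝ → α) (f : α → ℝ) (x : α) : ℝ :=
  ∫ t in Set.Ioo (0 : ℝ) 1, f (upd x t)

/-- Total-effect variance of the coordinate encoded by `upd`. -/
def tVar {α : Type*} [MeasurableSpace α] (μ : Measure α) (upd : α → ℝ → α) (f : α → ℝ) : ℝ :=
  intSq μ f - ∫ x, (cMean upd f x) ^ 2 ∂μ

/-- Total Sobol sensitivity index of the coordinate encoded by `upd`. -/
def sobolT {α : Type*} [MeasurableSpace α] (μ : Measure α) (upd : α → ℝ → α) (f : α → ℝ) : ℝ :=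
  tVar μ upd f / var' μ f

/-- Updating the `i`-th coordinate of a point of the cube. -/
def updC {n : ℕ} (i : Fin n) : (Fin n → ℝ) → ℝ → (Fin n → ℝ) :=
  fun x t => Function.update x i t

/-- Updating the `i`-th coordinate of the first component of a product point. -/
def updF {n : ℕ} {β : Type*} (i : Fin n) : ((Fin n → ℝ) × β) → ℝ → ((Fin n → ℝ) × β) :=
  fun p t => (Function.update p.1 i t, p.2)

end SobolDefs

/-! Write the total-effect variance as the mean of the variances along the fibres
`t ↦ x[i := t]`. Since `h` does not depend on `xᵢ`, along each fibre `g = G (f, h)` is an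
`L`-Lipschitz function of `f`, so its fibre variance is at most `L²` times that of `f`, and
so is its total-effect variance. Coercivity gives
`∫ g² ≥ c² (∫ f² + ∫ h²) ≥ c² (Var f + Var h)`, i.e. `Var g ≥ c² (Var f + Var h) - g₀²`,
and dividing the two estimates gives the bound. -/

open MeasureTheory ProbabilityTheory Set
open scoped NNReal

local notation "ν₀₁" => (volume.restrict (Ioo (0 : ℝ) 1))

instance : IsProbabilityMeasure ν₀₁ := ⟨by simp⟩

instance (n : ℕ) : IsProbabilityMeasure (uCube n) := by
  unfold uCube; infer_instance

theorem measurePreserving_update_pi {ι : Type*} [Fintype ι] [DecidableEq ι] {X : ι → Type*}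
    [∀ j, MeasurableSpace (X j)] (μ : ∀ j, Measure (X j)) [∀ j, IsProbabilityMeasure (μ j)]
    (i : ι) :
    MeasurePreserving (fun q : (∀ j, X j) × X i => Function.update q.1 i q.2)
      ((Measure.pi μ).prod (μ i)) (Measure.pi μ) := by
  have hmeas : Measurable (fun q : (∀ j, X j) × X i => Function.update q.1 i q.2) :=
    measurable_update'
  refine ⟨hmeas, (Measure.pi_eq fun s hs => ?_).symm⟩
  have hpre : (fun q : (∀ j, X j) × X i => Function.update q.1 i q.2) ⁻¹' univ.pi s
      = univ.pi (Function.update s i univ) ×ˢ s i := by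
    ext ⟨x, t⟩
    simp only [mem_preimage, mem_prod, mem_univ_pi]
    rw [Function.forall_update_iff (p := fun j y => y ∈ s j),
      Function.forall_update_iff (p := fun j S => x j ∈ S)]
    simp [and_comm]
  rw [Measure.map_apply hmeas (.univ_pi hs), hpre, Measure.prod_prod, Measure.pi_pi,
    ← Finset.prod_erase_mul _ _ (Finset.mem_univ i),
    ← Finset.prod_erase_mul _ _ (Finset.mem_univ i),
    Function.update_self, measure_univ, mul_one]
  congr 1
  exact Finset.prod_congr rfl fun j hj => by rw [Function.update_of_ne (Finset.ne_of_mem_erase hj)]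

section Variance

variable {Ω : Type*} [MeasurableSpace Ω] {μ : Measure Ω} [IsProbabilityMeasure μ]

theorem variance_le_integral_sub_sq {X : Ω → ℝ} (hX : AEStronglyMeasurable X μ) (a : ℝ) :
    Var[X; μ] ≤ ∫ ω, (X ω - a) ^ 2 ∂μ := by
  rw [← variance_sub_const hX a]
  exact variance_le_expectation_sq (hX.sub aestronglyMeasurable_const)

theorem variance_comp_le_of_lipschitzWith {X : Ω → ℝ} (hX : MemLp X 2 μ) {φ : ℝ → ℝ}
    {K : ℝ≥0} (hφ : LipschitzWith K φ) :
    Var[fun ω => φ (X ω); μ] ≤ K ^ 2 * Var[X; μ] := by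
  calc Var[fun ω => φ (X ω); μ]
      ≤ ∫ ω, (φ (X ω) - φ μ[X]) ^ 2 ∂μ :=
        variance_le_integral_sub_sq (hφ.continuous.comp_aestronglyMeasurable hX.1) _
    _ ≤ ∫ ω, K ^ 2 * (X ω - μ[X]) ^ 2 ∂μ := by
        refine integral_mono_of_nonneg (ae_of_all _ fun ω => sq_nonneg _)
          ((hX.sub (memLp_const _)).integrable_sq.const_mul _) (ae_of_all _ fun ω => ?_)
        dsimp only
        rw [← mul_pow, sq_le_sq, abs_mul, NNReal.abs_eq, ← Real.dist_eq, ← Real.dist_eq]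
        exact hφ.dist_le_mul _ _
    _ = K ^ 2 * Var[X; μ] := by
        rw [integral_const_mul, variance_eq_integral hX.1.aemeasurable]

end Variance

section Fiber

variable {α : Type*} [MeasurableSpace α] {μ : Measure α} {upd : α → ℝ → α} {F : α → ℝ}

noncomputable def fiberVar (upd : α → ℝ → α) (F : α → ℝ) (x : α) : ℝ :=
  Var[fun t => F (upd x t); ν₀₁]

theorem integrable_integral_fiber_sq
    (hupd : MeasurePreserving (fun q : α × ℝ => upd q.1 q.2) (μ.prod ν₀₁) μ)
    (hF : MemLp F 2 μ) : Integrable (fun x => ∫ t in Ioo (0 : ℝ) 1, F (upd x t) ^ 2) μ :=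
  (hF.comp_measurePreserving hupd).integrable_sq.integral_prod_left

variable [IsProbabilityMeasure μ]

theorem ae_memLp_fiber (hupd : MeasurePreserving (fun q : α × ℝ => upd q.1 q.2) (μ.prod ν₀₁) μ)
    (hF : MemLp F 2 μ) : ∀ᵐ x ∂μ, MemLp (fun t => F (upd x t)) 2 ν₀₁ := by
  have hFu := hF.comp_measurePreserving hupd
  filter_upwards [hFu.1.prodMk_left, hFu.integrable_sq.prod_right_ae] with x hm hi
  exact (memLp_two_iff_integrable_sq hm).2 hi

theorem integral_integral_fiber_sq
    (hupd : MeasurePreserving (fun q : α × ℝ => upd q.1 q.2) (μ.prod ν₀₁) μ)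
    (hF : MemLp F 2 μ) : ∫ x, (∫ t in Ioo (0 : ℝ) 1, F (upd x t) ^ 2) ∂μ = intSq μ F := by
  have hF2 : AEStronglyMeasurable (fun y => F y ^ 2)
      ((μ.prod ν₀₁).map fun q : α × ℝ => upd q.1 q.2) := by
    rw [hupd.map_eq]; exact hF.1.pow 2
  calc ∫ x, (∫ t in Ioo (0 : ℝ) 1, F (upd x t) ^ 2) ∂μ
      = ∫ q, F (upd q.1 q.2) ^ 2 ∂(μ.prod ν₀₁) :=
        (integral_prod _ (hF.comp_measurePreserving hupd).integrable_sq).symm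
    _ = ∫ y, F y ^ 2 ∂((μ.prod ν₀₁).map fun q : α × ℝ => upd q.1 q.2) :=
        (integral_map hupd.aemeasurable hF2).symm
    _ = intSq μ F := by rw [hupd.map_eq, intSq]

theorem fiberVar_ae_eq (hupd : MeasurePreserving (fun q : α × ℝ => upd q.1 q.2) (μ.prod ν₀₁) μ)
    (hF : MemLp F 2 μ) :
    fiberVar upd F =ᵐ[μ] fun x => (∫ t in Ioo (0 : ℝ) 1, F (upd x t) ^ 2) - cMean upd F x ^ 2 := by
  filter_upwards [ae_memLp_fiber hupd hF] with x hx
  exact variance_eq_sub hx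

theorem integrable_cMean_sq
    (hupd : MeasurePreserving (fun q : α × ℝ => upd q.1 q.2) (μ.prod ν₀₁) μ)
    (hF : MemLp F 2 μ) : Integrable (fun x => cMean upd F x ^ 2) μ := by
  have hFu := hF.comp_measurePreserving hupd
  refine (integrable_integral_fiber_sq hupd hF).mono'
    ((hFu.integrable one_le_two).1.integral_prod_right'.pow 2) ?_
  filter_upwards [fiberVar_ae_eq hupd hF] with x hx
  rw [Real.norm_of_nonneg (sq_nonneg _)]
  have : 0 ≤ fiberVar upd F x := variance_nonneg _ _
  linarith

theorem integrable_fiberVar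
    (hupd : MeasurePreserving (fun q : α × ℝ => upd q.1 q.2) (μ.prod ν₀₁) μ)
    (hF : MemLp F 2 μ) : Integrable (fiberVar upd F) μ :=
  ((integrable_integral_fiber_sq hupd hF).sub (integrable_cMean_sq hupd hF)).congr
    (fiberVar_ae_eq hupd hF).symm

theorem tVar_eq_integral_fiberVar
    (hupd : MeasurePreserving (fun q : α × ℝ => upd q.1 q.2) (μ.prod ν₀₁) μ)
    (hF : MemLp F 2 μ) : tVar μ upd F = ∫ x, fiberVar upd F x ∂μ := by
  rw [integral_congr_ae (fiberVar_ae_eq hupd hF),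
    integral_sub (integrable_integral_fiber_sq hupd hF) (integrable_cMean_sq hupd hF),
    integral_integral_fiber_sq hupd hF, tVar]

theorem tVar_nonneg (hupd : MeasurePreserving (fun q : α × ℝ => upd q.1 q.2) (μ.prod ν₀₁) μ)
    (hF : MemLp F 2 μ) : 0 ≤ tVar μ upd F := by
  rw [tVar_eq_integral_fiberVar hupd hF]
  exact integral_nonneg fun x => variance_nonneg _ _

end Fiber

section Product

variable {α β : Type*} [MeasurableSpace α] [MeasurableSpace β] {μ : Measure α} {κ : Measure β}
  [IsProbabilityMeasure μ] [IsProbabilityMeasure κ] {upd : α → ℝ → α}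

theorem MeasureTheory.MeasurePreserving.prod_update_fst
    (hupd : MeasurePreserving (fun q : α × ℝ => upd q.1 q.2) (μ.prod ν₀₁) μ) :
    MeasurePreserving (fun q : (α × β) × ℝ => (upd q.1.1 q.2, q.1.2))
      ((μ.prod κ).prod ν₀₁) (μ.prod κ) := by
  have hswap : MeasurePreserving (fun q : (α × β) × ℝ => ((q.1.1, q.2), q.1.2))
      ((μ.prod κ).prod ν₀₁) ((μ.prod ν₀₁).prod κ) :=
    (((measurePreserving_prodAssoc μ ν₀₁ κ).symm MeasurableEquiv.prodAssoc).comp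
      ((MeasurePreserving.id μ).prod (Measure.measurePreserving_swap (μ := κ) (ν := ν₀₁)))).comp
      (measurePreserving_prodAssoc μ κ ν₀₁)
  exact (hupd.prod (MeasurePreserving.id κ)).comp hswap

theorem tVar_prod_le_of_lipschitzWith
    (hupd : MeasurePreserving (fun q : α × ℝ => upd q.1 q.2) (μ.prod ν₀₁) μ)
    {F : α → ℝ} (hF : MemLp F 2 μ) {g : α × β → ℝ} (hg : MemLp g 2 (μ.prod κ))
    {K : ℝ≥0} {φ : α × β → ℝ → ℝ} (hφ : ∀ p, LipschitzWith K (φ p))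
    (hgφ : ∀ p t, g (upd p.1 t, p.2) = φ p (F (upd p.1 t))) :
    tVar (μ.prod κ) (fun p t => (upd p.1 t, p.2)) g ≤ K ^ 2 * tVar μ upd F := by
  have hupd' := hupd.prod_update_fst (κ := κ)
  have hfiber : ∀ᵐ p ∂(μ.prod κ),
      fiberVar (fun p t => (upd p.1 t, p.2)) g p ≤ K ^ 2 * fiberVar upd F p.1 := by
    filter_upwards [measurePreserving_fst.quasiMeasurePreserving.ae (ae_memLp_fiber hupd hF)]
      with p hp
    simp only [fiberVar, hgφ]
    exact variance_comp_le_of_lipschitzWith hp (hφ p)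
  calc tVar (μ.prod κ) (fun p t => (upd p.1 t, p.2)) g
      = ∫ p, fiberVar (fun p t => (upd p.1 t, p.2)) g p ∂(μ.prod κ) :=
        tVar_eq_integral_fiberVar hupd' hg
    _ ≤ ∫ p, K ^ 2 * fiberVar upd F p.1 ∂(μ.prod κ) :=
        integral_mono_of_nonneg (ae_of_all _ fun p => variance_nonneg _ _)
          ((measurePreserving_fst.integrable_comp_of_integrable
            (integrable_fiberVar hupd hF)).const_mul _) hfiber
    _ = K ^ 2 * tVar μ upd F := by
        rw [integral_fun_fst (fun x => K ^ 2 * fiberVar upd F x), probReal_univ, one_smul,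
          integral_const_mul, tVar_eq_integral_fiberVar hupd hF]

end Product

theorem var'_comp_fst {α β : Type*} [MeasurableSpace α] [MeasurableSpace β] (μ : Measure α)
    [SFinite μ] (κ : Measure β) [IsProbabilityMeasure κ] (F : α → ℝ) :
    var' (μ.prod κ) (fun p => F p.1) = var' μ F := by
  rw [var', var', intSq, intSq, mval, mval, integral_fun_fst (fun x => F x ^ 2),
    integral_fun_fst F, probReal_univ, one_smul, one_smul]

theorem sq_mul_add_var'_sub_sq_mval_le_var' {α : Type*} [MeasurableSpace α] {μ : Measure α}
    {u v w : α → ℝ} (hu : MemLp u 2 μ) (hv : MemLp v 2 μ) (hw : MemLp w 2 μ) {c : ℝ}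
    (huvw : ∀ x, c ^ 2 * (u x ^ 2 + v x ^ 2) ≤ w x ^ 2) :
    c ^ 2 * (var' μ u + var' μ v) - mval μ w ^ 2 ≤ var' μ w := by
  have hint : c ^ 2 * (intSq μ u + intSq μ v) ≤ intSq μ w := by
    rw [intSq, intSq, ← integral_add hu.integrable_sq hv.integrable_sq, ← integral_const_mul]
    exact integral_mono ((hu.integrable_sq.add hv.integrable_sq).const_mul _) hw.integrable_sq huvw
  have hvar : var' μ u + var' μ v ≤ intSq μ u + intSq μ v := by
    simp only [var']
    nlinarith [sq_nonneg (mval μ u), sq_nonneg (mval μ v)]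
  have := mul_le_mul_of_nonneg_left hvar (sq_nonneg c)
  have hw' : var' μ w = intSq μ w - mval μ w ^ 2 := rfl
  linarith

theorem stmt12_general {n m : ℕ} (i : Fin n) (G : ℝ → ℝ → ℝ) (L c : ℝ)
    (hc : 0 < c)
    (hLip : ∀ u u₀ v : ℝ, |G u v - G u₀ v| ≤ L * |u - u₀|)
    (hcoer : ∀ u v : ℝ, c * Real.sqrt (u ^ 2 + v ^ 2) ≤ |G u v|)
    (f : (Fin n → ℝ) → ℝ) (h : (Fin n → ℝ) × (Fin m → ℝ) → ℝ)
    (hf : MemLp f 2 (uCube n)) (hh : MemLp h 2 ((uCube n).prod (uCube m)))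
    (hind : ∀ (x : Fin n → ℝ) (t : ℝ) (ξ : Fin m → ℝ),
      h (Function.update x i t, ξ) = h (x, ξ))
    (hg : MemLp (fun p : (Fin n → ℝ) × (Fin m → ℝ) => G (f p.1) (h p)) 2
      ((uCube n).prod (uCube m)))
    (hvf : 0 < var' (uCube n) f)
    (hpos : 0 < c ^ 2 * (var' (uCube n) f + var' ((uCube n).prod (uCube m)) h) -
      (mval ((uCube n).prod (uCube m)) fun p => G (f p.1) (h p)) ^ 2) :
    sobolT ((uCube n).prod (uCube m)) (updF i) (fun p => G (f p.1) (h p)) ≤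
      2 * L ^ 2 * var' (uCube n) f * sobolT (uCube n) (updC i) f /
        (c ^ 2 * (var' (uCube n) f + var' ((uCube n).prod (uCube m)) h) -
          (mval ((uCube n).prod (uCube m)) fun p => G (f p.1) (h p)) ^ 2) := by
  have hL : 0 ≤ L := (abs_nonneg _).trans (by simpa using hLip 1 0 0)
  have hupd : MeasurePreserving (fun q => updC i q.1 q.2) ((uCube n).prod ν₀₁) (uCube n) :=
    measurePreserving_update_pi (fun _ => ν₀₁) i
  have htVar : tVar ((uCube n).prod (uCube m)) (updF i) (fun p => G (f p.1) (h p))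
      ≤ L ^ 2 * tVar (uCube n) (updC i) f :=
    tVar_prod_le_of_lipschitzWith (K := ⟨L, hL⟩) (φ := fun p u => G u (h p)) hupd hf hg
      (fun p => LipschitzWith.of_dist_le_mul fun u v => hLip u v (h p))
      (fun p t => by simp only [updC, hind])
  have hvar := sq_mul_add_var'_sub_sq_mval_le_var'
    (u := fun p : (Fin n → ℝ) × (Fin m → ℝ) => f p.1)
    (hf.comp_measurePreserving measurePreserving_fst) hh hg
    (fun p => by
      have := pow_le_pow_left₀ (by positivity) (hcoer (f p.1) (h p)) 2
      rwa [mul_pow, Real.sq_sqrt (by positivity), sq_abs] at this)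
  rw [var'_comp_fst] at hvar
  have htVar_nonneg := tVar_nonneg hupd hf
  rw [sobolT, sobolT, mul_assoc (2 * L ^ 2), mul_div_assoc', mul_div_cancel_left₀ _ hvf.ne']
  exact div_le_div₀ (by positivity) (by nlinarith) hpos hvar

/-- General estimate with arbitrary mean (Corollary D2): if
`c²(Var f + Var h) − g₀² > 0` then
`S^g_{T,x_i} ≤ 2L²·Var f·S^f_{T,x_i} / (c²(Var f + Var h) − g₀²)`. -/
theorem stmt12 {n m : ℕ} (i : Fin n) (G : ℝ → ℝ → ℝ) (L c : ℝ)
    (hc : 0 < c) (hLc : c ≤ L)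
    (hLip : ∀ u u₀ v : ℝ, |G u v - G u₀ v| ≤ L * |u - u₀|)
    (hcoer : ∀ u v : ℝ, c * Real.sqrt (u ^ 2 + v ^ 2) ≤ |G u v|)
    (f : (Fin n → ℝ) → ℝ) (h : (Fin n → ℝ) × (Fin m → ℝ) → ℝ)
    (hf : MemLp f 2 (uCube n)) (hh : MemLp h 2 ((uCube n).prod (uCube m)))
    (hind : ∀ (x : Fin n → ℝ) (t : ℝ) (ξ : Fin m → ℝ),
      h (Function.update x i t, ξ) = h (x, ξ))
    (hg : MemLp (fun p : (Fin n → ℝ) × (Fin m → ℝ) => G (f p.1) (h p)) 2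
      ((uCube n).prod (uCube m)))
    (hvf : 0 < var' (uCube n) f)
    (hvh : 0 < var' ((uCube n).prod (uCube m)) h)
    (hpos : 0 < c ^ 2 * (var' (uCube n) f + var' ((uCube n).prod (uCube m)) h) -
      (mval ((uCube n).prod (uCube m)) fun p => G (f p.1) (h p)) ^ 2) :
    sobolT ((uCube n).prod (uCube m)) (updF i) (fun p => G (f p.1) (h p)) ≤
      2 * L ^ 2 * var' (uCube n) f * sobolT (uCube n) (updC i) f /
        (c ^ 2 * (var' (uCube n) f + var' ((uCube n).prod (uCube m)) h) -
          (mval ((uCube n).prod (uCube m)) fun p => G (f p.1) (h p)) ^ 2) :=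
  stmt12_general i G L c hc hLip hcoer f h hf hh hind hg hvf hpos
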